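/- Let d ≥ 2 and let G be a closed fractal subgroup of Aut T_d. If H is an open normal subgroup of G that is prosolvable, then the self-similar closure of H in G is an open, normal, prosolvable subgroup of G. -/

import Mathlib

open scoped Pointwise

namespace TreeDyn

/-- Vertices of the `d`-regular rooted tree: finite words over `{0,…,d-1}`,
with the empty word as root and children of `w` the words `w ++ [x]`. -/
abbrev Vertex (d : ℕ) := List (Fin d)

/-- A function on words is length-preserving and prefix-preserving. -/
def LP (d : ℕ) (f : Vertex d → Vertex d) : Prop :=
  (∀ w : Vertex d, (f w).length = w.length) ∧
    ∀ v w : Vertex d, v <+: w → f v <+: f w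

theorem LP.id' (d : ℕ) : LP d id := ⟨fun _ => rfl, fun _ _ h => h⟩

theorem LP.comp {d : ℕ} {f g : Vertex d → Vertex d} (hf : LP d f) (hg : LP d g) :
    LP d (f ∘ g) :=
  ⟨fun w => (hf.1 (g w)).trans (hg.1 w), fun v w h => hf.2 _ _ (hg.2 _ _ h)⟩

/-- The automorphism group of the rooted `d`-regular tree, realized as the subgroup of
permutations of the vertex set which fix the root and preserve the child relation
(equivalently: length- and prefix-preserving permutations). -/
def treeAut (d : ℕ) : Subgroup (Equiv.Perm (Vertex d)) where
  carrier := {g | LP d ⇑g ∧ LP d ⇑g⁻¹}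
  one_mem' := ⟨LP.id' d, by simpa using LP.id' d⟩
  mul_mem' := by
    rintro a b ⟨ha1, ha2⟩ ⟨hb1, hb2⟩
    refine ⟨?_, ?_⟩
    · simpa [Equiv.Perm.coe_mul] using ha1.comp hb1
    · rw [mul_inv_rev]
      simpa [Equiv.Perm.coe_mul] using hb2.comp ha2
  inv_mem' := by
    rintro a ⟨h1, h2⟩
    exact ⟨h2, by simpa using h1⟩

/-- `Aut T_d`, the automorphism group of the `d`-regular rooted tree. -/
abbrev AutT (d : ℕ) := ↥(treeAut d)

namespace AutT

variable {d : ℕ}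

/-- The underlying permutation of the vertices. -/
def toPerm (g : AutT d) : Equiv.Perm (Vertex d) := g.1

theorem toPerm_mul (g h : AutT d) : (g * h).toPerm = g.toPerm * h.toPerm := rfl

theorem toPerm_inv (g : AutT d) : (g⁻¹).toPerm = (g.toPerm)⁻¹ := rfl

theorem toPerm_one : (1 : AutT d).toPerm = 1 := rfl

theorem length_apply (g : AutT d) (w : Vertex d) : (g.toPerm w).length = w.length :=
  g.2.1.1 w

theorem prefix_apply (g : AutT d) {v w : Vertex d} (h : v <+: w) :
    g.toPerm v <+: g.toPerm w :=
  g.2.1.2 v w h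

theorem take_apply (g : AutT d) (v u : Vertex d) :
    (g.toPerm (v ++ u)).take v.length = g.toPerm v := by
  have h : g.toPerm v <+: g.toPerm (v ++ u) := g.prefix_apply (List.prefix_append v u)
  have h2 := List.prefix_iff_eq_take.mp h
  rw [length_apply] at h2
  exact h2.symm

theorem apply_append (g : AutT d) (v u : Vertex d) :
    g.toPerm (v ++ u) = g.toPerm v ++ (g.toPerm (v ++ u)).drop v.length := by
  conv_lhs => rw [← List.take_append_drop v.length (g.toPerm (v ++ u))]
  rw [take_apply]

/-- The section function: the action of `g` on the subtree over `v`, transported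
to the whole tree. -/
def secFun (g : AutT d) (v : Vertex d) : Vertex d → Vertex d :=
  fun u => (g.toPerm (v ++ u)).drop v.length

theorem secFun_spec (g : AutT d) (v u : Vertex d) :
    g.toPerm (v ++ u) = g.toPerm v ++ secFun g v u :=
  apply_append g v u

theorem secFun_left (g : AutT d) (v u : Vertex d) :
    secFun g⁻¹ (g.toPerm v) (secFun g v u) = u := by
  have h1 := secFun_spec g⁻¹ (g.toPerm v) (secFun g v u)
  rw [← secFun_spec g v u] at h1
  rw [toPerm_inv] at h1
  simp only [Equiv.Perm.inv_def, Equiv.symm_apply_apply] at h1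
  exact (List.append_cancel_left h1).symm

theorem LP_secFun (g : AutT d) (v : Vertex d) : LP d (secFun g v) := by
  constructor
  · intro w
    simp only [secFun, List.length_drop, length_apply, List.length_append]
    omega
  · intro u1 u2 h
    have h2 : g.toPerm (v ++ u1) <+: g.toPerm (v ++ u2) := by
      refine g.prefix_apply ?_
      obtain ⟨t, ht⟩ := h
      exact ⟨t, by rw [List.append_assoc, ht]⟩
    exact h2.drop v.length

/-- The section of the tree automorphism `g` at the vertex `v`: the automorphism `g|_v` with
`g (v ++ u) = g v ++ g|_v u`. -/
def sec (g : AutT d) (v : Vertex d) : AutT d :=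
  ⟨{ toFun := secFun g v
     invFun := secFun g⁻¹ (g.toPerm v)
     left_inv := secFun_left g v
     right_inv := by
       intro u
       have h := secFun_left g⁻¹ (g.toPerm v) u
       rw [inv_inv] at h
       rw [toPerm_inv] at h
       simp only [Equiv.Perm.inv_def, Equiv.symm_apply_apply] at h
       exact h },
   by
     refine ⟨LP_secFun g v, ?_⟩
     have : ⇑(({ toFun := secFun g v
                 invFun := secFun g⁻¹ (g.toPerm v)
                 left_inv := secFun_left g v
                 right_inv := by
                   intro u
                   have h := secFun_left g⁻¹ (g.toPerm v) u
                   rw [inv_inv] at h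
                   rw [toPerm_inv] at h
                   simp only [Equiv.Perm.inv_def, Equiv.symm_apply_apply] at h
                   exact h } : Equiv.Perm (Vertex d))⁻¹) = secFun g⁻¹ (g.toPerm v) := rfl
     rw [this]
     exact LP_secFun g⁻¹ (g.toPerm v)⟩

theorem sec_apply (g : AutT d) (v u : Vertex d) :
    (sec g v).toPerm u = (g.toPerm (v ++ u)).drop v.length := rfl

end AutT

open AutT

/-- The stabilizer of the vertex `v` in `Aut T_d`. -/
def stabT (d : ℕ) (v : Vertex d) : Subgroup (AutT d) where
  carrier := {g | g.toPerm v = v}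
  one_mem' := rfl
  mul_mem' := by
    intro a b ha hb
    show (a * b).toPerm v = v
    rw [toPerm_mul, Equiv.Perm.mul_apply]
    rw [show b.toPerm v = v from hb, show a.toPerm v = v from ha]
  inv_mem' := by
    intro a ha
    show (a⁻¹).toPerm v = v
    rw [toPerm_inv]
    rw [Equiv.Perm.inv_eq_iff_eq]
    exact (show a.toPerm v = v from ha).symm

/-- The self-similarity homomorphism `π_v` from the stabilizer of `v` to `Aut T_d`,
`g ↦ g|_v`. -/
def secHom (d : ℕ) (v : Vertex d) : (stabT d v) →* AutT d where
  toFun g := sec g.1 v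
  map_one' := by
    apply Subtype.ext
    apply Equiv.ext
    intro u
    show ((1 : AutT d).toPerm (v ++ u)).drop v.length = (1 : AutT d).toPerm u
    rw [toPerm_one]
    simp [List.drop_left]
  map_mul' := by
    intro a b
    apply Subtype.ext
    apply Equiv.ext
    intro u
    have hb : (b.1).toPerm v = v := b.2
    show ((a.1 * b.1).toPerm (v ++ u)).drop v.length
        = (sec a.1 v).toPerm ((sec b.1 v).toPerm u)
    rw [toPerm_mul, Equiv.Perm.mul_apply]
    congr 1
    congr 1
    have h := secFun_spec b.1 v u
    rw [hb] at h
    exact h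

/-- The image subgroup `H^v = π_v(H_v)` of the stabilizer of `v` in `H` under the
self-similarity map. -/
def secSG (d : ℕ) (H : Subgroup (AutT d)) (v : Vertex d) : Subgroup (AutT d) :=
  (H.subgroupOf (stabT d v)).map (secHom d v)

/-- A subgroup of `Aut T_d` is self-similar if `H^v ≤ H` for every vertex `v`. -/
def IsSelfSimilar (d : ℕ) (H : Subgroup (AutT d)) : Prop :=
  ∀ v : Vertex d, secSG d H v ≤ H

/-- A subgroup of `Aut T_d` is fractal if `H^v = H` for every vertex `v`. -/
def IsFractal (d : ℕ) (H : Subgroup (AutT d)) : Prop :=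
  ∀ v : Vertex d, secSG d H v = H

end TreeDyn
namespace TreeDyn

open AutT

variable {d : ℕ}

instance : TopologicalSpace (Vertex d) := ⊥
instance : DiscreteTopology (Vertex d) := ⟨rfl⟩

/-- The profinite topology on `Aut T_d`: the topology of pointwise convergence on vertices. -/
instance : TopologicalSpace (AutT d) :=
  TopologicalSpace.induced (fun g : AutT d => (g.toPerm : Vertex d → Vertex d)) inferInstance

theorem continuous_toFun : Continuous fun g : AutT d => (g.toPerm : Vertex d → Vertex d) :=
  continuous_induced_dom

theorem continuous_ev (x : Vertex d) : Continuous fun g : AutT d => g.toPerm x :=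
  (continuous_apply x).comp continuous_toFun

instance : IsTopologicalGroup (AutT d) where
  continuous_mul := by
    apply continuous_induced_rng.2
    show Continuous fun p : AutT d × AutT d => ((p.1 * p.2).toPerm : Vertex d → Vertex d)
    apply continuous_pi
    intro x
    rw [continuous_discrete_rng]
    intro z
    have heq : ((fun p : AutT d × AutT d => (p.1 * p.2).toPerm x)) ⁻¹' {z}
        = ⋃ y : Vertex d, ((fun p : AutT d × AutT d => p.2.toPerm x) ⁻¹' {y})
            ∩ ((fun p : AutT d × AutT d => p.1.toPerm y) ⁻¹' {z}) := by
      ext p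
      simp only [Set.mem_preimage, Set.mem_singleton_iff, Set.mem_iUnion, Set.mem_inter_iff]
      constructor
      · intro h
        exact ⟨p.2.toPerm x, rfl, by rw [toPerm_mul, Equiv.Perm.mul_apply] at h; exact h⟩
      · rintro ⟨y, h1, h2⟩
        rw [toPerm_mul, Equiv.Perm.mul_apply, h1, h2]
    rw [heq]
    apply isOpen_iUnion
    intro y
    exact ((isOpen_discrete _).preimage ((continuous_ev x).comp continuous_snd)).inter
      ((isOpen_discrete _).preimage ((continuous_ev y).comp continuous_fst))
  continuous_inv := by
    apply continuous_induced_rng.2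
    show Continuous fun g : AutT d => ((g⁻¹).toPerm : Vertex d → Vertex d)
    apply continuous_pi
    intro x
    rw [continuous_discrete_rng]
    intro z
    have heq : (fun g : AutT d => (g⁻¹).toPerm x) ⁻¹' {z}
        = (fun g : AutT d => g.toPerm z) ⁻¹' {x} := by
      ext g
      simp only [Set.mem_preimage, Set.mem_singleton_iff]
      rw [toPerm_inv]
      exact Equiv.Perm.inv_eq_iff_eq.trans eq_comm
    rw [heq]
    exact (isOpen_discrete _).preimage (continuous_ev z)

end TreeDyn
namespace TreeDyn

open AutT

/-- `J` is the self-similar closure of `H` in `G`: the smallest closed self-similar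
subgroup of `G` containing `H`. -/
def IsSelfSimilarClosure (d : ℕ) (G H J : Subgroup (AutT d)) : Prop :=
  H ≤ J ∧ J ≤ G ∧ IsClosed (J : Set (AutT d)) ∧ IsSelfSimilar d J ∧
    ∀ J' : Subgroup (AutT d), H ≤ J' → J' ≤ G → IsClosed (J' : Set (AutT d)) →
      IsSelfSimilar d J' → J ≤ J'

/-- The pointwise stabilizer in `Aut T_d` of the vertices at level `m`. -/
def levelStab (d : ℕ) (m : ℕ) : Subgroup (AutT d) where
  carrier := {g | ∀ v : Vertex d, v.length = m → g.toPerm v = v}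
  one_mem' := fun _ _ => rfl
  mul_mem' := by
    intro a b ha hb v hv
    show (a * b).toPerm v = v
    rw [toPerm_mul, Equiv.Perm.mul_apply, hb v hv, ha v hv]
  inv_mem' := by
    intro a ha v hv
    show (a⁻¹).toPerm v = v
    rw [toPerm_inv, Equiv.Perm.inv_eq_iff_eq]
    exact (ha v hv).symm

/-- A topological group is pronilpotent if its quotient by every open normal subgroup
is nilpotent. -/
def Pronilpotent (G : Type*) [Group G] [TopologicalSpace G] : Prop :=
  ∀ (N : Subgroup G) [N.Normal], IsOpen (N : Set G) → Group.IsNilpotent (G ⧸ N)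

/-- A topological group is pro-`p` if its quotient by every open normal subgroup
is a `p`-group. -/
def IsProP (p : ℕ) (G : Type*) [Group G] [TopologicalSpace G] : Prop :=
  ∀ (N : Subgroup G) [N.Normal], IsOpen (N : Set G) → IsPGroup p (G ⧸ N)

/-- A topological group is prosolvable if its quotient by every open normal subgroup
is solvable. -/
def Prosolvable (G : Type*) [Group G] [TopologicalSpace G] : Prop :=
  ∀ (N : Subgroup G) [N.Normal], IsOpen (N : Set G) → IsSolvable (G ⧸ N)

/-- The Frattini subgroup of a topological group: the intersection of its
maximal open (proper) subgroups. -/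
def frattiniOpen (G : Type*) [Group G] [TopologicalSpace G] : Subgroup G :=
  sInf {M : Subgroup G | IsOpen (M : Set G) ∧ M ≠ ⊤ ∧
    ∀ M' : Subgroup G, IsOpen (M' : Set G) → M < M' → M' = ⊤}

end TreeDyn
namespace TreeDyn

open AutT

variable {d : ℕ}

/-- The cyclic successor on `Fin d`. -/
def succFin (x : Fin d) : Fin d :=
  ⟨(x.1 + 1) % d, Nat.mod_lt _ (Nat.lt_of_le_of_lt (Nat.zero_le _) x.2)⟩

/-- The cyclic predecessor on `Fin d`. -/
def predFin (x : Fin d) : Fin d :=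
  ⟨(x.1 + (d - 1)) % d, Nat.mod_lt _ (Nat.lt_of_le_of_lt (Nat.zero_le _) x.2)⟩

theorem predFin_succFin (x : Fin d) : predFin (succFin x) = x := by
  have hd : 0 < d := Nat.lt_of_le_of_lt (Nat.zero_le _) x.2
  apply Fin.ext
  show ((x.1 + 1) % d + (d - 1)) % d = x.1
  rw [Nat.mod_add_mod, show x.1 + 1 + (d - 1) = x.1 + d by omega, Nat.add_mod_right,
    Nat.mod_eq_of_lt x.2]

theorem succFin_predFin (x : Fin d) : succFin (predFin x) = x := by
  have hd : 0 < d := Nat.lt_of_le_of_lt (Nat.zero_le _) x.2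
  apply Fin.ext
  show ((x.1 + (d - 1)) % d + 1) % d = x.1
  rw [Nat.mod_add_mod, show x.1 + (d - 1) + 1 = x.1 + d by omega, Nat.add_mod_right,
    Nat.mod_eq_of_lt x.2]

theorem succFin_val_eq_zero_iff (x : Fin d) : (succFin x).1 = 0 ↔ x.1 + 1 = d := by
  show (x.1 + 1) % d = 0 ↔ x.1 + 1 = d
  by_cases h : x.1 + 1 = d
  · simp [h, Nat.mod_self]
  · rw [Nat.mod_eq_of_lt (by omega)]
    omega

theorem predFin_val_succ_eq_iff (x : Fin d) : (predFin x).1 + 1 = d ↔ x.1 = 0 := by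
  have hd : 0 < d := Nat.lt_of_le_of_lt (Nat.zero_le _) x.2
  show (x.1 + (d - 1)) % d + 1 = d ↔ x.1 = 0
  rcases Nat.eq_zero_or_pos x.1 with h | h
  · rw [h]
    simp only [Nat.zero_add]
    rw [Nat.mod_eq_of_lt (show d - 1 < d by omega)]
    simp only [iff_true, eq_self_iff_true]
    omega
  · rw [show x.1 + (d - 1) = (x.1 - 1) + d by omega, Nat.add_mod_right,
      Nat.mod_eq_of_lt (show x.1 - 1 < d by omega)]
    omega

/-- The odometer function: adds one with carrying, on words read root-first. -/
def odF (d : ℕ) : Vertex d → Vertex d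
  | [] => []
  | x :: u => succFin x :: (if x.1 + 1 = d then odF d u else u)

/-- The inverse odometer function. -/
def odG (d : ℕ) : Vertex d → Vertex d
  | [] => []
  | x :: u => predFin x :: (if x.1 = 0 then odG d u else u)

theorem odG_odF (u : Vertex d) : odG d (odF d u) = u := by
  induction u with
  | nil => rfl
  | cons x t ih =>
    simp only [odF, odG, predFin_succFin]
    by_cases h : x.1 + 1 = d
    · rw [if_pos h, if_pos ((succFin_val_eq_zero_iff x).mpr h), ih]
    · rw [if_neg h, if_neg (fun hc => h ((succFin_val_eq_zero_iff x).mp hc))]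

theorem odF_odG (u : Vertex d) : odF d (odG d u) = u := by
  induction u with
  | nil => rfl
  | cons x t ih =>
    simp only [odF, odG, succFin_predFin]
    by_cases h : x.1 = 0
    · rw [if_pos h, if_pos ((predFin_val_succ_eq_iff x).mpr h), ih]
    · rw [if_neg h, if_neg (fun hc => h ((predFin_val_succ_eq_iff x).mp hc))]

theorem odF_append (a b : Vertex d) :
    odF d (a ++ b) = odF d a ++ (if ∀ x ∈ a, x.1 + 1 = d then odF d b else b) := by
  induction a with
  | nil => simp [odF]
  | cons x t ih =>
    by_cases h : x.1 + 1 = d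
    · by_cases h2 : ∀ y ∈ t, y.1 + 1 = d
      · have hall : ∀ y ∈ x :: t, y.1 + 1 = d := by
          intro y hy
          rcases List.mem_cons.mp hy with rfl | hy
          · exact h
          · exact h2 y hy
        simp only [List.cons_append, List.append_eq, odF, if_pos h, if_pos h2, if_pos hall, ih]
      · have hall : ¬ ∀ y ∈ x :: t, y.1 + 1 = d :=
          fun hc => h2 fun y hy => hc y (List.mem_cons_of_mem x hy)
        simp only [List.cons_append, List.append_eq, odF, if_pos h, if_neg h2, if_neg hall, ih]
    · have hall : ¬ ∀ y ∈ x :: t, y.1 + 1 = d :=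
        fun hc => h (hc x (List.mem_cons_self))
      simp only [List.cons_append, List.append_eq, odF, if_neg h, if_neg hall]

theorem odG_append (a b : Vertex d) :
    odG d (a ++ b) = odG d a ++ (if ∀ x ∈ a, x.1 = 0 then odG d b else b) := by
  induction a with
  | nil => simp [odG]
  | cons x t ih =>
    by_cases h : x.1 = 0
    · by_cases h2 : ∀ y ∈ t, y.1 = 0
      · have hall : ∀ y ∈ x :: t, y.1 = 0 := by
          intro y hy
          rcases List.mem_cons.mp hy with rfl | hy
          · exact h
          · exact h2 y hy
        simp only [List.cons_append, List.append_eq, odG, if_pos h, if_pos h2, if_pos hall, ih]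
      · have hall : ¬ ∀ y ∈ x :: t, y.1 = 0 :=
          fun hc => h2 fun y hy => hc y (List.mem_cons_of_mem x hy)
        simp only [List.cons_append, List.append_eq, odG, if_pos h, if_neg h2, if_neg hall, ih]
    · have hall : ¬ ∀ y ∈ x :: t, y.1 = 0 :=
        fun hc => h (hc x (List.mem_cons_self))
      simp only [List.cons_append, List.append_eq, odG, if_neg h, if_neg hall]

theorem LP_odF : LP d (odF d) := by
  constructor
  · intro w
    induction w with
    | nil => rfl
    | cons x t ih =>
      simp only [odF]
      by_cases h : x.1 + 1 = d <;> simp [h, ih]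
  · intro v w h
    obtain ⟨t, rfl⟩ := h
    rw [odF_append]
    exact ⟨_, rfl⟩

theorem LP_odG : LP d (odG d) := by
  constructor
  · intro w
    induction w with
    | nil => rfl
    | cons x t ih =>
      simp only [odG]
      by_cases h : x.1 = 0 <;> simp [h, ih]
  · intro v w h
    obtain ⟨t, rfl⟩ := h
    rw [odG_append]
    exact ⟨_, rfl⟩

/-- The standard odometer as a permutation of the vertices. -/
def odPerm (d : ℕ) : Equiv.Perm (Vertex d) where
  toFun := odF d
  invFun := odG d
  left_inv := odG_odF
  right_inv := odF_odG

/-- The standard odometer `ω ∈ Aut T_d` (adds one to a `d`-adic digit string,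
with carrying). -/
def od (d : ℕ) : AutT d :=
  ⟨odPerm d, ⟨LP_odF, LP_odG⟩⟩

/-- The standard `d`-cycle `σ = (0 1 … d-1)` on the first level. -/
def sigmaFin (d : ℕ) : Equiv.Perm (Fin d) where
  toFun := succFin
  invFun := predFin
  left_inv := predFin_succFin
  right_inv := succFin_predFin

end TreeDyn


/-!
Let `H₀ = H` and let `Hₙ₊₁` be generated by the sections of `Hₙ` at all vertices. The union `U`
of this increasing chain is the smallest self-similar subgroup containing `H`, and the
self-similar closure `J` is its topological closure (`J ⊓ closure U` competes with `J` in the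
minimality). Since `G` is fractal, every `g ∈ G` is the section at `v` of some `g' ∈ G_v`, so
conjugation by `g` on `Hₙ^v` is induced by conjugation by `g'` on `Hₙ`: all `Hₙ`, hence `U` and
`J`, are normalized by `G`.

For prosolvability work modulo the level stabilizers `K_m`, which are open of finite index. The
section map at `v` sends `K_{|v|+m}` into `K_m`, so the image of `Hₙ^v` mod `K_m` is a quotient of
the image of `Hₙ` mod `K_{|v|+m}`; by induction every `Hₙ` has solvable image mod every `K_m`.
These images are normal subgroups of the image of `G` in the finite group `Aut T_d / K_m`, so their
join, the image of `U`, which equals the image of `J`, is solvable.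
-/

section SolvableSubgroups

variable {Γ : Type*} [Group Γ]

theorem Group.isSolvable_iff_exists_derivedSeries_le_ker {Γ' : Type*} [Group Γ'] {f : Γ →* Γ'}
    (hf : Function.Surjective f) : Group.IsSolvable Γ' ↔ ∃ n, derivedSeries Γ n ≤ f.ker := by
  simp only [Group.isSolvable_def, ← map_derivedSeries_eq hf, Subgroup.map_eq_bot_iff]

theorem Group.isSolvable_of_ker_le_ker {Γ₁ Γ₂ : Type*} [Group Γ₁] [Group Γ₂] (α : Γ →* Γ₁)
    {χ : Γ →* Γ₂} (hχ : Function.Surjective χ) (h : α.ker ≤ χ.ker)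
    (hα : Group.IsSolvable α.range) : Group.IsSolvable Γ₂ := by
  obtain ⟨n, hn⟩ := (isSolvable_iff_exists_derivedSeries_le_ker α.rangeRestrict_surjective).mp hα
  rw [MonoidHom.ker_rangeRestrict] at hn
  exact (isSolvable_iff_exists_derivedSeries_le_ker hχ).mpr ⟨n, hn.trans h⟩

theorem Subgroup.isSolvable_of_le {A B : Subgroup Γ} (h : A ≤ B) [Group.IsSolvable B] :
    Group.IsSolvable A :=
  Group.isSolvable_of_isSolvable_injective (Subgroup.inclusion_injective h)

theorem Subgroup.isSolvable_sup_of_le_normalizer {A B : Subgroup Γ}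
    (hBA : B ≤ Subgroup.normalizer (A : Set Γ)) [Group.IsSolvable A] [Group.IsSolvable B] :
    Group.IsSolvable ↥(A ⊔ B) := by
  rw [sup_comm]
  have : (A.subgroupOf (B ⊔ A)).Normal := Subgroup.normal_subgroupOf_sup_of_le_normalizer hBA
  -- `B ⊔ A = B * A`, so the quotient by `A` is an image of `B`
  have : Group.IsSolvable (↥(B ⊔ A) ⧸ A.subgroupOf (B ⊔ A)) := by
    refine Group.isSolvable_of_surjective
      (f := (QuotientGroup.mk' _).comp (Subgroup.inclusion le_sup_left)) fun y => ?_
    obtain ⟨z, rfl⟩ := QuotientGroup.mk'_surjective _ y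
    obtain ⟨b, hb, a, ha, hz⟩ : (z : Γ) ∈ (B : Set Γ) * A := by
      rw [← Subgroup.coe_mul_of_left_le_normalizer_right B A hBA]
      exact z.2
    refine ⟨⟨b, hb⟩, QuotientGroup.eq.mpr ?_⟩
    simpa [Subgroup.mem_subgroupOf, ← hz] using ha
  exact Group.isSolvable_of_ker_le_range (Subgroup.inclusion le_sup_right)
    (QuotientGroup.mk' (A.subgroupOf (B ⊔ A)))
    (by rw [QuotientGroup.ker_mk', Subgroup.inclusion_range])

theorem Subgroup.isSolvable_iSup_of_le_normalizer [Finite Γ] {ι : Sort*} {P : Subgroup Γ}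
    {N : ι → Subgroup Γ} (hle : ∀ i, N i ≤ P) (hnorm : ∀ i, P ≤ Subgroup.normalizer (N i : Set Γ))
    (hsolv : ∀ i, Group.IsSolvable (N i)) : Group.IsSolvable ↥(⨆ i, N i) := by
  have hfin : (Set.range N).Finite := Set.toFinite _
  have hsup : ⨆ i, N i = hfin.toFinset.sup id := by
    rw [Finset.sup_id_eq_sSup, Set.Finite.coe_toFinset, sSup_range]
  suffices h : hfin.toFinset.sup id ≤ P ∧
      P ≤ Subgroup.normalizer ((hfin.toFinset.sup id : Subgroup Γ) : Set Γ) ∧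
      Group.IsSolvable ↥(hfin.toFinset.sup id) by
    rw [hsup]; exact h.2.2
  refine Finset.sup_induction (p := fun K : Subgroup Γ => K ≤ P ∧
      P ≤ Subgroup.normalizer (K : Set Γ) ∧ Group.IsSolvable K)
    ⟨bot_le, le_top.trans (Subgroup.normalizer_eq_top_iff.mpr inferInstance).ge, inferInstance⟩
    ?_ ?_
  · rintro A ⟨hAP, hPA, hA⟩ B ⟨hBP, hPB, hB⟩
    exact ⟨sup_le hAP hBP,
      (le_inf hPA hPB).trans (Subgroup.normalizer_inf_normalizer_le_normalizer_sup A B),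
      Subgroup.isSolvable_sup_of_le_normalizer (hBP.trans hPA)⟩
  · intro K hK
    obtain ⟨i, rfl⟩ := hfin.mem_toFinset.mp hK
    exact ⟨hle i, hnorm i, hsolv i⟩

theorem Subgroup.isSolvable_map_iSup_of_le_normalizer {Q : Type*} [Group Q] [Finite Q]
    (f : Γ →* Q) {ι : Sort*} {G : Subgroup Γ} {N : ι → Subgroup Γ} (hle : ∀ i, N i ≤ G)
    (hnorm : ∀ i, G ≤ Subgroup.normalizer (N i : Set Γ))
    (hsolv : ∀ i, Group.IsSolvable ((N i).map f)) : Group.IsSolvable ((⨆ i, N i).map f) := by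
  rw [Subgroup.map_iSup]
  exact Subgroup.isSolvable_iSup_of_le_normalizer (P := G.map f)
    (fun i => Subgroup.map_mono (hle i))
    (fun i => (Subgroup.map_mono (hnorm i)).trans (Subgroup.le_normalizer_map f)) hsolv

theorem Subgroup.le_normalizer_of_conj_mem {G A : Subgroup Γ}
    (h : ∀ g ∈ G, ∀ a ∈ A, g * a * g⁻¹ ∈ A) : G ≤ Subgroup.normalizer (A : Set Γ) := by
  intro g hg
  refine Subgroup.mem_normalizer_iff.mpr fun a => ⟨h g hg a, fun ha => ?_⟩
  simpa [mul_assoc] using h g⁻¹ (inv_mem hg) _ ha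

variable [TopologicalSpace Γ] [IsTopologicalGroup Γ]

theorem Subgroup.le_normalizer_topologicalClosure {G A : Subgroup Γ}
    (h : G ≤ Subgroup.normalizer (A : Set Γ)) :
    G ≤ Subgroup.normalizer (A.topologicalClosure : Set Γ) :=
  Subgroup.le_normalizer_of_conj_mem fun g hg _ ha =>
    map_mem_closure (f := fun x => g * x * g⁻¹) (IsTopologicalGroup.continuous_conj g) ha
      fun a ha => (Subgroup.mem_normalizer_iff.mp (h hg) a).mp ha

theorem Subgroup.map_mk'_topologicalClosure (A K : Subgroup Γ) [K.Normal]
    (hK : IsOpen (K : Set Γ)) :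
    A.topologicalClosure.map (QuotientGroup.mk' K) = A.map (QuotientGroup.mk' K) := by
  refine le_antisymm ?_ (Subgroup.map_mono A.le_topologicalClosure)
  -- `A ⊔ K` is open, hence closed
  have hAK : A.topologicalClosure ≤ A ⊔ K := A.topologicalClosure_minimal le_sup_left
    (Subgroup.isClosed_of_isOpen _ (Subgroup.isOpen_mono le_sup_right hK))
  calc A.topologicalClosure.map (QuotientGroup.mk' K) ≤ (A ⊔ K).map (QuotientGroup.mk' K) :=
        Subgroup.map_mono hAK
    _ = A.map (QuotientGroup.mk' K) := by
        rw [Subgroup.map_sup, QuotientGroup.map_mk'_self, sup_bot_eq]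

end SolvableSubgroups

namespace TreeDyn

open AutT QuotientGroup Subgroup

variable {d : ℕ}

instance levelStab_normal (m : ℕ) : (levelStab d m).Normal := by
  refine ⟨fun n hn g v hv => ?_⟩
  have hlen : ((g.toPerm)⁻¹ v).length = m := by rw [← toPerm_inv, length_apply, hv]
  change (g * n * g⁻¹).toPerm v = v
  rw [toPerm_mul, toPerm_mul, toPerm_inv, Equiv.Perm.mul_apply, Equiv.Perm.mul_apply, hn _ hlen,
    Equiv.Perm.inv_def, Equiv.apply_symm_apply]

theorem levelStab_antitone : Antitone (levelStab d) := by
  intro k m hkm g hg v hv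
  rcases v with _ | ⟨x, t⟩
  · exact List.eq_nil_of_length_eq_zero (length_apply g [])
  -- pad `v` to a vertex at level `m`, which `g` fixes, and read off its prefix
  have hpad := hg ((x :: t) ++ List.replicate (m - k) x) (by
    rw [List.length_append, List.length_replicate, hv]; omega)
  rw [← take_apply g (x :: t) (List.replicate (m - k) x), hpad, List.take_left]

theorem isOpen_levelStab (m : ℕ) : IsOpen (levelStab d m : Set (AutT d)) := by
  have : Finite {v : Vertex d // v.length = m} := (List.finite_length_eq (Fin d) m).to_subtype
  have heq : (levelStab d m : Set (AutT d))
      = ⋂ v : {v : Vertex d // v.length = m}, (fun g : AutT d => g.toPerm v) ⁻¹' {v.1} := by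
    ext g
    simp only [Set.mem_iInter, Set.mem_preimage, Set.mem_singleton_iff, Subtype.forall]
    rfl
  rw [heq]
  exact isOpen_iInter_of_finite fun v => (isOpen_discrete _).preimage (continuous_ev v.1)

theorem exists_levelStab_subset {U : Set (AutT d)} (hU : IsOpen U) (h1 : (1 : AutT d) ∈ U) :
    ∃ m, (levelStab d m : Set (AutT d)) ⊆ U := by
  obtain ⟨V, hV, rfl⟩ := isOpen_induced_iff.mp hU
  obtain ⟨I, u, hu, hIV⟩ := isOpen_pi_iff.mp hV _ h1
  refine ⟨I.sup List.length, fun g hg => hIV fun w hw => ?_⟩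
  have hfix : g.toPerm w = w := levelStab_antitone (I.le_sup hw) hg w rfl
  change g.toPerm w ∈ u w
  rw [hfix]
  exact (hu w hw).2

instance finite_quotient_levelStab (m : ℕ) : Finite (AutT d ⧸ levelStab d m) := by
  have : Finite {v : Vertex d // v.length = m} := (List.finite_length_eq (Fin d) m).to_subtype
  -- orbit–stabilizer: the orbit of `v` lies in its level, which is finite
  have hstab (v : Vertex d) : (MulAction.stabilizer (AutT d) v).FiniteIndex := by
    refine ⟨?_⟩
    rw [MulAction.index_stabilizer]
    refine (Set.ncard_pos ((List.finite_length_eq (Fin d) v.length).subset ?_)).mpr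
      ⟨v, MulAction.mem_orbit_self v⟩ |>.ne'
    rintro _ ⟨g, rfl⟩
    exact length_apply g v
  have : levelStab d m =
      ⨅ v : {v : Vertex d // v.length = m}, MulAction.stabilizer (AutT d) v.1 := by
    ext g
    simp only [Subgroup.mem_iInf, Subtype.forall]
    rfl
  rw [this]
  have := Subgroup.finiteIndex_iInf fun v : {v : Vertex d // v.length = m} => hstab v.1
  infer_instance

theorem sec_mem_levelStab {g : AutT d} {v : Vertex d} {m : ℕ}
    (hg : g ∈ levelStab d (v.length + m)) : sec g v ∈ levelStab d m := by
  intro u hu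
  rw [sec_apply, hg (v ++ u) (by rw [List.length_append, hu]), List.drop_left]

theorem continuous_sec (v : Vertex d) : Continuous fun g : AutT d => sec g v :=
  continuous_induced_rng.2 <| continuous_pi fun u =>
    (continuous_of_discreteTopology (f := fun w : Vertex d => w.drop v.length)).comp
      (continuous_ev (v ++ u))

theorem mem_secSG_iff {A : Subgroup (AutT d)} {v : Vertex d} {x : AutT d} :
    x ∈ secSG d A v ↔ ∃ g ∈ stabT d v, g ∈ A ∧ sec g v = x := by
  constructor
  · rintro ⟨⟨g, hgs⟩, hgA, rfl⟩
    exact ⟨g, hgs, hgA, rfl⟩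
  · rintro ⟨g, hgs, hgA, rfl⟩
    exact ⟨⟨g, hgs⟩, hgA, rfl⟩

theorem secSG_mono {A B : Subgroup (AutT d)} (h : A ≤ B) (v : Vertex d) :
    secSG d A v ≤ secSG d B v :=
  map_mono (comap_mono h)

theorem secSG_nil (A : Subgroup (AutT d)) : secSG d A [] = A := by
  have hsec (g : AutT d) : sec g [] = g := Subtype.ext <| Equiv.ext fun _ => rfl
  have hstab (g : AutT d) : g ∈ stabT d [] := List.eq_nil_of_length_eq_zero (length_apply g [])
  ext x
  simp only [mem_secSG_iff, hsec]
  exact ⟨fun ⟨_, _, hg, hgx⟩ => hgx ▸ hg, fun hx => ⟨x, hstab x, hx, rfl⟩⟩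

theorem IsFractal.isSelfSimilar {G : Subgroup (AutT d)} (hG : IsFractal d G) :
    IsSelfSimilar d G :=
  fun v => (hG v).le

theorem IsSelfSimilar.inf {A B : Subgroup (AutT d)} (hA : IsSelfSimilar d A)
    (hB : IsSelfSimilar d B) : IsSelfSimilar d (A ⊓ B) :=
  fun v => le_inf ((secSG_mono inf_le_left v).trans (hA v))
    ((secSG_mono inf_le_right v).trans (hB v))

theorem IsSelfSimilar.topologicalClosure {A : Subgroup (AutT d)} (hA : IsSelfSimilar d A) :
    IsSelfSimilar d A.topologicalClosure := by
  intro v x hx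
  obtain ⟨g, hgs, hgA, rfl⟩ := mem_secSG_iff.mp hx
  -- the stabilizer of `v` is open, so `g` is a limit of elements of `A` fixing `v`
  have hg : g ∈ _root_.closure ((stabT d v : Set (AutT d)) ∩ A) := by
    refine (IsOpen.inter_closure ?_) ⟨hgs, hgA⟩
    exact (isOpen_discrete {v}).preimage (continuous_ev v)
  refine map_mem_closure (f := fun g => sec g v) (continuous_sec v) hg fun a ⟨has, haA⟩ => hA v ?_
  exact mem_secSG_iff.mpr ⟨a, has, haA, rfl⟩

theorem le_normalizer_secSG {G A : Subgroup (AutT d)} {v : Vertex d} (hG : G ≤ secSG d G v)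
    (hGA : G ≤ normalizer (A : Set (AutT d))) : G ≤ normalizer (secSG d A v : Set (AutT d)) :=
  hG.trans <| (map_mono ((comap_mono hGA).trans (le_normalizer_comap _))).trans
    (le_normalizer_map _)

/-- The root is among the vertices `v`, and `secSG d A [] = A`, so the sequence increases. -/
def secSeq (d : ℕ) (H : Subgroup (AutT d)) : ℕ → Subgroup (AutT d)
  | 0 => H
  | n + 1 => ⨆ v, secSG d (secSeq d H n) v

def secClosure (d : ℕ) (H : Subgroup (AutT d)) : Subgroup (AutT d) :=
  ⨆ n, secSeq d H n

section SecSeq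

variable {H : Subgroup (AutT d)}

theorem secSeq_mono : Monotone (secSeq d H) :=
  monotone_nat_of_le_succ fun n => (secSG_nil _).ge.trans (le_iSup (secSG d (secSeq d H n)) [])

theorem secSeq_le {J : Subgroup (AutT d)} (hHJ : H ≤ J) (hJ : IsSelfSimilar d J) (n : ℕ) :
    secSeq d H n ≤ J := by
  induction n with
  | zero => exact hHJ
  | succ n ih => exact iSup_le fun v => (secSG_mono ih v).trans (hJ v)

theorem secClosure_le {J : Subgroup (AutT d)} (hHJ : H ≤ J) (hJ : IsSelfSimilar d J) :
    secClosure d H ≤ J :=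
  iSup_le (secSeq_le hHJ hJ)

theorem le_secClosure : H ≤ secClosure d H :=
  le_iSup (secSeq d H) 0

theorem isSelfSimilar_secClosure : IsSelfSimilar d (secClosure d H) := by
  intro v x hx
  obtain ⟨g, hgs, hg, rfl⟩ := mem_secSG_iff.mp hx
  obtain ⟨n, hn⟩ := (mem_iSup_of_directed secSeq_mono.directed_le).mp hg
  exact mem_iSup_of_mem (n + 1) (mem_iSup_of_mem v (mem_secSG_iff.mpr ⟨g, hgs, hn, rfl⟩))

theorem le_normalizer_secSeq {G : Subgroup (AutT d)} (hG : IsFractal d G)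
    (hGH : G ≤ normalizer (H : Set (AutT d))) (n : ℕ) :
    G ≤ normalizer (secSeq d H n : Set (AutT d)) := by
  induction n with
  | zero => exact hGH
  | succ n ih =>
    exact (le_iInf fun v => le_normalizer_secSG (hG v).ge ih).trans
      (iInf_normalizer_le_normalizer_iSup _)

theorem le_normalizer_secClosure {G : Subgroup (AutT d)} (hG : IsFractal d G)
    (hGH : G ≤ normalizer (H : Set (AutT d))) :
    G ≤ normalizer (secClosure d H : Set (AutT d)) :=
  (le_iInf (le_normalizer_secSeq hG hGH)).trans (iInf_normalizer_le_normalizer_iSup _)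

end SecSeq

theorem IsSelfSimilarClosure.eq_topologicalClosure {G H J : Subgroup (AutT d)}
    (hJ : IsSelfSimilarClosure d G H J) : J = (secClosure d H).topologicalClosure := by
  obtain ⟨hHJ, hJG, hJclosed, hJss, hJmin⟩ := hJ
  set L := (secClosure d H).topologicalClosure
  refine le_antisymm ?_ (topologicalClosure_minimal _ (secClosure_le hHJ hJss) hJclosed)
  have hJL : J ≤ J ⊓ L :=
    hJmin (J ⊓ L) (le_inf hHJ (le_secClosure.trans (le_topologicalClosure _)))
    (inf_le_left.trans hJG) (hJclosed.inter (isClosed_topologicalClosure _))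
    (hJss.inf isSelfSimilar_secClosure.topologicalClosure)
  exact hJL.trans inf_le_right

theorem Prosolvable.isSolvable_map_mk' {A : Subgroup (AutT d)} (hA : Prosolvable A) (m : ℕ) :
    Group.IsSolvable (A.map (mk' (levelStab d m))) := by
  have hopen : IsOpen ((levelStab d m).subgroupOf A : Set A) :=
    (isOpen_levelStab m).preimage continuous_subtype_val
  have : Group.IsSolvable (A ⧸ (levelStab d m).subgroupOf A) := hA _ hopen
  refine Group.isSolvable_of_ker_le_ker (mk' ((levelStab d m).subgroupOf A))
    ((mk' _).subgroupMap_surjective A) (fun x hx => ?_) inferInstance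
  rw [ker_mk'] at hx
  exact Subtype.ext ((QuotientGroup.eq_one_iff _).mpr hx)

theorem prosolvable_of_isSolvable_map_mk' {A : Subgroup (AutT d)}
    (hA : ∀ m, Group.IsSolvable (A.map (mk' (levelStab d m)))) : Prosolvable A := by
  intro N _ hN
  obtain ⟨V, hV, hVN⟩ := isOpen_induced_iff.mp hN
  obtain ⟨m, hm⟩ :=
    exists_levelStab_subset hV (show (1 : A) ∈ Subtype.val ⁻¹' V from hVN ▸ one_mem N)
  have := hA m
  refine Group.isSolvable_of_ker_le_ker ((mk' (levelStab d m)).subgroupMap A) (mk'_surjective N)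
    (fun x hx => ?_) (isSolvable_of_le le_top)
  rw [ker_mk', ← SetLike.mem_coe, ← hVN]
  exact hm ((QuotientGroup.eq_one_iff _).mp (congrArg Subtype.val hx))

theorem isSolvable_map_secSG {A : Subgroup (AutT d)} {v : Vertex d} {m : ℕ}
    (hA : Group.IsSolvable (A.map (mk' (levelStab d (v.length + m))))) :
    Group.IsSolvable ((secSG d A v).map (mk' (levelStab d m))) := by
  rw [secSG, Subgroup.map_map]
  set B := A.subgroupOf (stabT d v)
  refine Group.isSolvable_of_ker_le_ker
    ((mk' (levelStab d (v.length + m))).comp ((stabT d v).subtype.comp B.subtype))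
    (MonoidHom.subgroupMap_surjective _ B) (fun x hx => ?_)
    (isSolvable_of_le (B := A.map (mk' (levelStab d (v.length + m)))) ?_)
  · exact Subtype.ext ((QuotientGroup.eq_one_iff _).mpr
      (sec_mem_levelStab ((QuotientGroup.eq_one_iff _).mp hx)))
  · rintro _ ⟨x, rfl⟩
    exact ⟨x.1.1, x.2, rfl⟩

theorem isSolvable_map_secSeq {G H : Subgroup (AutT d)} (hG : IsFractal d G) (hHG : H ≤ G)
    (hGH : G ≤ normalizer (H : Set (AutT d)))
    (hH : ∀ m, Group.IsSolvable (H.map (mk' (levelStab d m)))) (n m : ℕ) :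
    Group.IsSolvable ((secSeq d H n).map (mk' (levelStab d m))) := by
  induction n generalizing m with
  | zero => exact hH m
  | succ n ih =>
    exact isSolvable_map_iSup_of_le_normalizer _
      (fun v => (secSG_mono (secSeq_le hHG hG.isSelfSimilar n) v).trans (hG v).le)
      (fun v => le_normalizer_secSG (hG v).ge (le_normalizer_secSeq hG hGH n))
      (fun v => isSolvable_map_secSG (ih _))

theorem isSolvable_map_secClosure {G H : Subgroup (AutT d)} (hG : IsFractal d G) (hHG : H ≤ G)
    (hGH : G ≤ normalizer (H : Set (AutT d)))
    (hH : ∀ m, Group.IsSolvable (H.map (mk' (levelStab d m)))) (m : ℕ) :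
    Group.IsSolvable ((secClosure d H).map (mk' (levelStab d m))) :=
  isSolvable_map_iSup_of_le_normalizer _ (secSeq_le hHG hG.isSelfSimilar)
    (le_normalizer_secSeq hG hGH) fun n => isSolvable_map_secSeq hG hHG hGH hH n m

theorem prosolvable_selfSimilarClosure_general (d : ℕ)
    (G : Subgroup (AutT d))
    (hGfractal : IsFractal d G)
    (H : Subgroup (AutT d))
    (hHopen : IsOpen ((H.subgroupOf G) : Set G))
    (hHnormal : (H.subgroupOf G).Normal)
    (hHsolv : Prosolvable H) :
    ∀ J : Subgroup (AutT d), IsSelfSimilarClosure d G H J →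
      IsOpen ((J.subgroupOf G) : Set G) ∧ (J.subgroupOf G).Normal ∧ Prosolvable J := by
  intro J hJ
  have hHG : H ≤ G := hJ.1.trans hJ.2.1
  have hGH := (normal_subgroupOf_iff_le_normalizer hHG).mp hHnormal
  refine ⟨isOpen_mono (subgroupOf_mono G hJ.1) hHopen, ?_, ?_⟩
  · rw [normal_subgroupOf_iff_le_normalizer hJ.2.1, hJ.eq_topologicalClosure]
    exact le_normalizer_topologicalClosure (le_normalizer_secClosure hGfractal hGH)
  · rw [hJ.eq_topologicalClosure]
    refine prosolvable_of_isSolvable_map_mk' fun m => ?_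
    rw [map_mk'_topologicalClosure _ _ (isOpen_levelStab m)]
    exact isSolvable_map_secClosure hGfractal hHG hGH hHsolv.isSolvable_map_mk' m

/-- **Open normal prosolvable subgroups are self-similarity-closed.**
Let `d ≥ 2` and let `G` be a closed fractal subgroup of `Aut T_d`.  If `H` is an open
normal subgroup of `G` that is prosolvable, then the self-similar closure of `H` in `G`
is an open, normal, prosolvable subgroup of `G`. -/
theorem prosolvable_selfSimilarClosure (d : ℕ) (hd : 2 ≤ d)
    (G : Subgroup (AutT d)) (hGclosed : IsClosed (G : Set (AutT d)))
    (hGfractal : IsFractal d G)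
    (H : Subgroup (AutT d)) (hHG : H ≤ G)
    (hHopen : IsOpen ((H.subgroupOf G) : Set G))
    (hHnormal : (H.subgroupOf G).Normal)
    (hHsolv : Prosolvable H) :
    ∀ J : Subgroup (AutT d), IsSelfSimilarClosure d G H J →
      IsOpen ((J.subgroupOf G) : Set G) ∧ (J.subgroupOf G).Normal ∧ Prosolvable J :=
  prosolvable_selfSimilarClosure_general d G hGfractal H hHopen hHnormal hHsolv

end TreeDyn
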